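/- arXiv:2212.14494 — 5 statements merged into one kernel-verified Lean document; each statement's English description precedes it below -/
import Mathlib

section
/- Let D be a category with a terminal object 1 and with limits of diagrams of shape ω^op (countable cochains). Let F : D → D be an endofunctor and let L = lim_n F^n(1) be the limit of the terminal sequence 1 ← F(1) ← F²(1) ← F³(1) ← ⋯, whose connecting morphisms are the iterated images F^n(!) of the unique morphism ! : F(1) → 1. If F preserves this limit, in the sense that the canonical morphism F(L) → L (induced by the cone F applied to the limit cone) is an isomorphism, then L, equipped with the inverse of this canonical morphism as structure map L → F(L), is a terminal coalgebra for F. -/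
open CategoryTheory CategoryTheory.Limits

universe v u

variable {D : Type u} [Category.{v} D]

/-- The objects `F^n 1` of the terminal sequence of an endofunctor. -/
noncomputable def iterObj (F : D ⥤ D) [HasTerminal D] : ℕ → D
  | 0 => ⊤_ D
  | n + 1 => F.obj (iterObj F n)

/-- The connecting morphisms `F^{n+1} 1 ⟶ F^n 1` of the terminal sequence: the iterated
images `F^n !` of the unique morphism `! : F 1 ⟶ 1`. -/
noncomputable def iterStep (F : D ⥤ D) [HasTerminal D] :
    ∀ n, iterObj F (n + 1) ⟶ iterObj F n
  | 0 => terminal.from _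
  | n + 1 => F.map (iterStep F n)

/-- The cone maps from a coalgebra carrier to the terminal sequence. -/
noncomputable def coneMap (F : D ⥤ D) [HasTerminal D] (Y : D) (β : Y ⟶ F.obj Y) :
    ∀ n, Y ⟶ iterObj F n
  | 0 => terminal.from _
  | n + 1 => β ≫ F.map (coneMap F Y β n)

lemma coneMap_compat (F : D ⥤ D) [HasTerminal D] (Y : D) (β : Y ⟶ F.obj Y) :
    ∀ n, coneMap F Y β (n + 1) ≫ iterStep F n = coneMap F Y β n
  | 0 => terminal.hom_ext _ _
  | n + 1 => by
      show (β ≫ F.map _) ≫ F.map _ = β ≫ F.map _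
      rw [Category.assoc, ← F.map_comp, coneMap_compat F Y β n]

/-- **Adámek's theorem.**  Suppose `L` is a limit of the terminal sequence of `F`
(witnessed by projections `π` with the universal property of the limit of an `ωᵒᵖ`-chain),
and suppose `can : F L ⟶ L` is the canonical morphism (characterised by
`can ≫ π (n+1) = F.map (π n)`).  If `can` is an isomorphism, then the coalgebra
`(L, can⁻¹)` is a terminal object in the category of `F`-coalgebras. -/
theorem adamek (F : D ⥤ D) [HasTerminal D] [HasLimitsOfShape ℕᵒᵖ D]
    (L : D) (π : ∀ n, L ⟶ iterObj F n)
    (hcompat : ∀ n, π (n + 1) ≫ iterStep F n = π n)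
    (hlim : ∀ (W : D) (g : ∀ n, W ⟶ iterObj F n),
      (∀ n, g (n + 1) ≫ iterStep F n = g n) → ∃! u : W ⟶ L, ∀ n, u ≫ π n = g n)
    (can : F.obj L ⟶ L)
    (hcan : ∀ n, can ≫ π (n + 1) = F.map (π n))
    [IsIso can] :
    Nonempty (IsTerminal (⟨L, inv can⟩ : Endofunctor.Coalgebra F)) := by
  have H : ∀ Y : Endofunctor.Coalgebra F,
      ∃! u : Y.V ⟶ L, ∀ n, u ≫ π n = coneMap F Y.V Y.str n :=
    fun Y => hlim Y.V (coneMap F Y.V Y.str) (coneMap_compat F Y.V Y.str)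
  choose u hu using H
  have hu1 : ∀ Y n, u Y ≫ π n = coneMap F Y.V Y.str n := fun Y => (hu Y).1
  have huniq : ∀ Y (v : Y.V ⟶ L), (∀ n, v ≫ π n = coneMap F Y.V Y.str n) → v = u Y :=
    fun Y => (hu Y).2
  -- any coalgebra morphism's underlying map projects to `coneMap`
  have key : ∀ (Y : Endofunctor.Coalgebra F) (v : Y.V ⟶ L),
      Y.str ≫ F.map v = v ≫ inv can → ∀ n, v ≫ π n = coneMap F Y.V Y.str n := by
    intro Y v hv
    have hv' : v = Y.str ≫ F.map v ≫ can := by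
      rw [← Category.assoc, hv, Category.assoc, IsIso.inv_hom_id, Category.comp_id]
    intro n
    induction n with
    | zero => exact terminal.hom_ext _ _
    | succ n ih =>
        show v ≫ π (n + 1) = Y.str ≫ F.map (coneMap F Y.V Y.str n)
        calc v ≫ π (n + 1) = (Y.str ≫ F.map v ≫ can) ≫ π (n + 1) := by rw [← hv']
          _ = Y.str ≫ F.map v ≫ can ≫ π (n + 1) := by
                rw [Category.assoc, Category.assoc]
          _ = (Y.str ≫ F.map v ≫ F.map (π n) : Y.V ⟶ iterObj F (n + 1)) := by
                exact congrArg (fun k => Y.str ≫ F.map v ≫ k) (hcan n)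
          _ = (Y.str ≫ F.map (v ≫ π n) : Y.V ⟶ iterObj F (n + 1)) := by
                exact congrArg (fun k => Y.str ≫ k) (F.map_comp v (π n)).symm
          _ = (Y.str ≫ F.map (coneMap F Y.V Y.str n) : Y.V ⟶ iterObj F (n + 1)) := by
                exact congrArg (fun k => Y.str ≫ F.map k) ih
  -- `u Y` is a coalgebra morphism
  have hstr : ∀ Y : Endofunctor.Coalgebra F, Y.str ≫ F.map (u Y) = u Y ≫ inv can := by
    intro Y
    have key2 : Y.str ≫ F.map (u Y) ≫ can = u Y := by
      rw [huniq Y (Y.str ≫ F.map (u Y) ≫ can) ?_]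
      intro n
      cases n with
      | zero => exact terminal.hom_ext _ _
      | succ n =>
          show (Y.str ≫ F.map (u Y) ≫ can) ≫ π (n + 1) = Y.str ≫ F.map (coneMap F Y.V Y.str n)
          calc (Y.str ≫ F.map (u Y) ≫ can) ≫ π (n + 1)
              = Y.str ≫ F.map (u Y) ≫ can ≫ π (n + 1) := by
                rw [Category.assoc, Category.assoc]
            _ = (Y.str ≫ F.map (u Y) ≫ F.map (π n) : Y.V ⟶ iterObj F (n + 1)) := by
                exact congrArg (fun k => Y.str ≫ F.map (u Y) ≫ k) (hcan n)
            _ = (Y.str ≫ F.map (u Y ≫ π n) : Y.V ⟶ iterObj F (n + 1)) := by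
                exact congrArg (fun k => Y.str ≫ k) (F.map_comp (u Y) (π n)).symm
            _ = (Y.str ≫ F.map (coneMap F Y.V Y.str n) : Y.V ⟶ iterObj F (n + 1)) := by
                exact congrArg (fun k => Y.str ≫ F.map k) (hu1 Y n)
    conv_rhs => rw [← key2]
    simp
  exact ⟨IsTerminal.ofUniqueHom (fun Y => ⟨u Y, hstr Y⟩)
    (fun Y m => Endofunctor.Coalgebra.Hom.ext (huniq Y m.f (key Y m.f m.h)))⟩
end

section
/- A symmetric monoidal category (C,⊗,I) is cartesian monoidal — that is, I is a terminal object and, for all objects X and Y, the object X⊗Y with projections (id_X ⊗ ε_Y) : X⊗Y → X and (ε_X ⊗ id_Y) : X⊗Y → Y (up to unitors) is a categorical product of X and Y — if and only if: every object X carries a counital comagma structure (δ_X : X → X⊗X, ε_X : X → I) with δ_X ; (id_X ⊗ ε_X) = id_X = δ_X ; (ε_X ⊗ id_X) (up to unitors); every morphism f : X → Y is a comagma homomorphism, i.e., f ; δ_Y = δ_X ; (f ⊗ f) and f ; ε_Y = ε_X; and the structure is uniform: ε_{X⊗Y} = ε_X ⊗ ε_Y, ε_I = id_I, δ_I = id (up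 to unitors), and δ_{X⊗Y} = (δ_X ⊗ δ_Y) ; (id_X ⊗ σ_{X,Y} ⊗ id_Y). -/
/-!
In a cartesian monoidal category the diagonals and the discards `ε` form a counital comagma
structure, and each uniformity law is an equation between maps into a product, so it is checked
on the two projections; for `δ (X ⊗ Y)` the discards are moved through `tensorμ` by its
naturality and the monoidality of the unitors.

Conversely, `δ T ≫ (f ⊗ g)` pairs `f` and `g`: its projections are `f` and `g` by counitality
and naturality of `ε`, and it is the only pairing because `δ` is natural and
`δ (X ⊗ Y) ≫ (π₁ ⊗ π₂) = 𝟙`. The latter follows from uniformity of `δ`, since the braiding of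
the unit with itself is the identity. The unit is terminal because
`f = f ≫ ε (𝟙_ C) = ε X` for every `f : X ⟶ 𝟙_ C`.
-/

open CategoryTheory CategoryTheory.Limits CategoryTheory.MonoidalCategory

universe v u

variable (C : Type u) [Category.{v} C] [MonoidalCategory C] [SymmetricCategory C]

/-- A symmetric monoidal category is *cartesian monoidal* when its unit is a terminal
object (witnessed by the family `ε` of unique morphisms into it) and, for all objects
`X` and `Y`, the object `X ⊗ Y` with projections `(id_X ⊗ ε_Y) : X ⊗ Y ⟶ X` and
`(ε_X ⊗ id_Y) : X ⊗ Y ⟶ Y` (up to unitors) is a categorical product of `X` and `Y`. -/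
def CartesianMonoidal : Prop :=
  ∃ ε : ∀ X : C, X ⟶ 𝟙_ C,
    (∀ (X : C) (f : X ⟶ 𝟙_ C), f = ε X) ∧
    ∀ X Y : C,
      Nonempty (IsLimit (BinaryFan.mk
        ((X ◁ ε Y) ≫ (ρ_ X).hom) ((ε X ▷ Y) ≫ (λ_ Y).hom)))

/-- Every object carries a counital comagma structure `(δ, ε)`, every morphism is a
comagma homomorphism, and the structure is uniform across the monoidal category. -/
def UniformComagmaStructure : Prop :=
  ∃ (δ : ∀ X : C, X ⟶ X ⊗ X) (ε : ∀ X : C, X ⟶ 𝟙_ C),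
    -- counitality (up to unitors)
    (∀ X : C, δ X ≫ (X ◁ ε X) ≫ (ρ_ X).hom = 𝟙 X) ∧
    (∀ X : C, δ X ≫ (ε X ▷ X) ≫ (λ_ X).hom = 𝟙 X) ∧
    -- every morphism is a comagma homomorphism
    (∀ (X Y : C) (f : X ⟶ Y), f ≫ δ Y = δ X ≫ (f ⊗ₘ f)) ∧
    (∀ (X Y : C) (f : X ⟶ Y), f ≫ ε Y = ε X) ∧
    -- uniformity
    (∀ X Y : C, ε (X ⊗ Y) = (ε X ⊗ₘ ε Y) ≫ (λ_ (𝟙_ C)).hom) ∧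
    (ε (𝟙_ C) = 𝟙 (𝟙_ C)) ∧
    (δ (𝟙_ C) = (λ_ (𝟙_ C)).inv) ∧
    (∀ X Y : C, δ (X ⊗ Y) = (δ X ⊗ₘ δ Y) ≫ tensorμ X X Y Y)

section Comagma

variable {C : Type u} [Category.{v} C] [MonoidalCategory C]

lemma comagma_lift_fst {T X Y : C} {δ : T ⟶ T ⊗ T} {εT : T ⟶ 𝟙_ C} {εY : Y ⟶ 𝟙_ C}
    (hδ : δ ≫ (T ◁ εT) ≫ (ρ_ T).hom = 𝟙 T) (f : T ⟶ X) {g : T ⟶ Y} (hg : g ≫ εY = εT) :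
    (δ ≫ (f ⊗ₘ g)) ≫ (X ◁ εY) ≫ (ρ_ X).hom = f := by
  calc (δ ≫ (f ⊗ₘ g)) ≫ (X ◁ εY) ≫ (ρ_ X).hom = δ ≫ f ▷ T ≫ X ◁ (g ≫ εY) ≫ (ρ_ X).hom := by
        simp [MonoidalCategory.tensorHom_def]
    _ = f := by rw [hg]; simp [← whisker_exchange_assoc, reassoc_of% hδ]

lemma comagma_lift_snd {T X Y : C} {δ : T ⟶ T ⊗ T} {εT : T ⟶ 𝟙_ C} {εX : X ⟶ 𝟙_ C}
    (hδ : δ ≫ (εT ▷ T) ≫ (λ_ T).hom = 𝟙 T) {f : T ⟶ X} (g : T ⟶ Y) (hf : f ≫ εX = εT) :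
    (δ ≫ (f ⊗ₘ g)) ≫ (εX ▷ Y) ≫ (λ_ Y).hom = g := by
  calc (δ ≫ (f ⊗ₘ g)) ≫ (εX ▷ Y) ≫ (λ_ Y).hom = δ ≫ T ◁ g ≫ (f ≫ εX) ▷ Y ≫ (λ_ Y).hom := by
        simp [MonoidalCategory.tensorHom_def']
    _ = g := by rw [hf]; simp [whisker_exchange_assoc, reassoc_of% hδ]

lemma hom_ext_of_isLimit_discard {X Y T : C} {εX : X ⟶ 𝟙_ C} {εY : Y ⟶ 𝟙_ C}
    (L : IsLimit (BinaryFan.mk ((X ◁ εY) ≫ (ρ_ X).hom) ((εX ▷ Y) ≫ (λ_ Y).hom)))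
    {p q : T ⟶ X ⊗ Y} (h₁ : p ≫ (X ◁ εY) ≫ (ρ_ X).hom = q ≫ (X ◁ εY) ≫ (ρ_ X).hom)
    (h₂ : p ≫ (εX ▷ Y) ≫ (λ_ Y).hom = q ≫ (εX ▷ Y) ≫ (λ_ Y).hom) : p = q :=
  BinaryFan.IsLimit.hom_ext L h₁ h₂

def isLimitOfComagma {X Y : C} (δ : ∀ T : C, T ⟶ T ⊗ T) (ε : ∀ T : C, T ⟶ 𝟙_ C)
    (hfst : ∀ T : C, δ T ≫ (T ◁ ε T) ≫ (ρ_ T).hom = 𝟙 T)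
    (hsnd : ∀ T : C, δ T ≫ (ε T ▷ T) ≫ (λ_ T).hom = 𝟙 T)
    (hδ : ∀ {S T : C} (f : S ⟶ T), f ≫ δ T = δ S ≫ (f ⊗ₘ f))
    (hε : ∀ {S T : C} (f : S ⟶ T), f ≫ ε T = ε S)
    (hsplit : δ (X ⊗ Y) ≫ (((X ◁ ε Y) ≫ (ρ_ X).hom) ⊗ₘ ((ε X ▷ Y) ≫ (λ_ Y).hom)) = 𝟙 _) :
    IsLimit (BinaryFan.mk ((X ◁ ε Y) ≫ (ρ_ X).hom) ((ε X ▷ Y) ≫ (λ_ Y).hom)) :=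
  BinaryFan.IsLimit.mk _ (fun {T} f g => δ T ≫ (f ⊗ₘ g))
    (fun f g => comagma_lift_fst (hfst _) f (hε g))
    (fun f g => comagma_lift_snd (hsnd _) g (hε f))
    (fun {T} f g m hf hg => by
      have hm : m ≫ δ (X ⊗ Y) = δ T ≫ (m ⊗ₘ m) := hδ m
      calc m = m ≫ δ (X ⊗ Y) ≫ (((X ◁ ε Y) ≫ (ρ_ X).hom) ⊗ₘ ((ε X ▷ Y) ≫ (λ_ Y).hom)) := by
            rw [hsplit]; exact (Category.comp_id m).symm
        _ = δ T ≫ (f ⊗ₘ g) := by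
            rw [reassoc_of% hm, tensorHom_comp_tensorHom, ← hf, ← hg]; rfl)

end Comagma

section Braided

variable {C : Type u} [Category.{v} C] [MonoidalCategory C] [BraidedCategory C]

lemma braiding_tensorUnit_tensorUnit : (β_ (𝟙_ C) (𝟙_ C)).hom = 𝟙 _ := by
  rw [braiding_tensorUnit_right, ← unitors_equal, Iso.hom_inv_id]

lemma tensorμ_tensorUnit_tensorUnit (X Y : C) : tensorμ X (𝟙_ C) (𝟙_ C) Y = 𝟙 _ := by
  rw [tensorμ, braiding_tensorUnit_tensorUnit]
  monoidal

lemma tensorμ_comp_discard_tensorHom_discard (X Y : C) (u : X ⟶ 𝟙_ C) (v : Y ⟶ 𝟙_ C) :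
    tensorμ X X Y Y ≫ (((X ◁ v) ≫ (ρ_ X).hom) ⊗ₘ ((u ▷ Y) ≫ (λ_ Y).hom)) =
      ((X ◁ u) ≫ (ρ_ X).hom) ⊗ₘ ((v ▷ Y) ≫ (λ_ Y).hom) := by
  have h : tensorμ X X Y Y ≫ (X ◁ v ⊗ₘ u ▷ Y) = (X ◁ u ⊗ₘ v ▷ Y) ≫ tensorμ X _ _ Y := by
    simpa using (tensorμ_natural (𝟙 X) u v (𝟙 Y)).symm
  rw [← tensorHom_comp_tensorHom, reassoc_of% h, tensorμ_tensorUnit_tensorUnit,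
    Category.id_comp, tensorHom_comp_tensorHom]

lemma comagma_tensor_fst {X Y : C} {δX : X ⟶ X ⊗ X} {δY : Y ⟶ Y ⊗ Y} {εX : X ⟶ 𝟙_ C}
    {εY : Y ⟶ 𝟙_ C} (hX : δX ≫ (X ◁ εX) ≫ (ρ_ X).hom = 𝟙 X)
    (hY : δY ≫ (Y ◁ εY) ≫ (ρ_ Y).hom = 𝟙 Y) :
    ((δX ⊗ₘ δY) ≫ tensorμ X X Y Y) ≫ ((X ⊗ Y) ◁ ((εX ⊗ₘ εY) ≫ (λ_ (𝟙_ C)).hom)) ≫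
      (ρ_ (X ⊗ Y)).hom = 𝟙 (X ⊗ Y) := by
  have h : tensorμ X X Y Y ≫ (X ⊗ Y) ◁ (εX ⊗ₘ εY) = (X ◁ εX ⊗ₘ Y ◁ εY) ≫ tensorμ X _ Y _ := by
    simpa using (tensorμ_natural (𝟙 X) εX (𝟙 Y) εY).symm
  rw [whiskerLeft_comp_assoc, Category.assoc, reassoc_of% h, ← rightUnitor_monoidal,
    tensorHom_comp_tensorHom, tensorHom_comp_tensorHom, hX, hY, id_tensorHom_id]

lemma comagma_tensor_snd {X Y : C} {δX : X ⟶ X ⊗ X} {δY : Y ⟶ Y ⊗ Y} {εX : X ⟶ 𝟙_ C}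
    {εY : Y ⟶ 𝟙_ C} (hX : δX ≫ (εX ▷ X) ≫ (λ_ X).hom = 𝟙 X)
    (hY : δY ≫ (εY ▷ Y) ≫ (λ_ Y).hom = 𝟙 Y) :
    ((δX ⊗ₘ δY) ≫ tensorμ X X Y Y) ≫ (((εX ⊗ₘ εY) ≫ (λ_ (𝟙_ C)).hom) ▷ (X ⊗ Y)) ≫
      (λ_ (X ⊗ Y)).hom = 𝟙 (X ⊗ Y) := by
  have h : tensorμ X X Y Y ≫ (εX ⊗ₘ εY) ▷ (X ⊗ Y) = (εX ▷ X ⊗ₘ εY ▷ Y) ≫ tensorμ _ X _ Y := by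
    simpa using (tensorμ_natural εX (𝟙 X) εY (𝟙 Y)).symm
  rw [comp_whiskerRight_assoc, Category.assoc, reassoc_of% h, ← leftUnitor_monoidal,
    tensorHom_comp_tensorHom, tensorHom_comp_tensorHom, hX, hY, id_tensorHom_id]

end Braided

theorem uniformComagmaStructure_of_cartesianMonoidal (h : CartesianMonoidal C) :
    UniformComagmaStructure C := by
  obtain ⟨ε, hε, hlim⟩ := h
  have L (X Y : C) := (hlim X Y).some
  let δ (X : C) : X ⟶ X ⊗ X := (BinaryFan.IsLimit.lift' (L X X) (𝟙 X) (𝟙 X)).1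
  have hfst (X : C) : δ X ≫ (X ◁ ε X) ≫ (ρ_ X).hom = 𝟙 X :=
    (BinaryFan.IsLimit.lift' (L X X) (𝟙 X) (𝟙 X)).2.1
  have hsnd (X : C) : δ X ≫ (ε X ▷ X) ≫ (λ_ X).hom = 𝟙 X :=
    (BinaryFan.IsLimit.lift' (L X X) (𝟙 X) (𝟙 X)).2.2
  have hε_natural {X Y : C} (f : X ⟶ Y) : f ≫ ε Y = ε X := hε X _
  have hε_tensor (X Y : C) : ε (X ⊗ Y) = (ε X ⊗ₘ ε Y) ≫ (λ_ (𝟙_ C)).hom := (hε _ _).symm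
  have hε_unit : ε (𝟙_ C) = 𝟙 (𝟙_ C) := (hε _ _).symm
  refine ⟨δ, ε, hfst, hsnd, fun X Y f => ?_, fun X Y f => hε_natural f, hε_tensor, hε_unit, ?_,
    fun X Y => ?_⟩
  · refine hom_ext_of_isLimit_discard (L Y Y) ?_ ?_
    · rw [Category.assoc, hfst, Category.comp_id, comagma_lift_fst (hfst X) f (hε_natural f)]
    · rw [Category.assoc, hsnd, Category.comp_id, comagma_lift_snd (hsnd X) f (hε_natural f)]
  · refine hom_ext_of_isLimit_discard (L _ _) ((hfst _).trans ?_) ((hsnd _).trans ?_)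
    · simp [hε_unit, unitors_inv_equal]
    · simp [hε_unit]
  · refine hom_ext_of_isLimit_discard (L _ _) ((hfst _).trans ?_) ((hsnd _).trans ?_)
    · rw [hε_tensor, comagma_tensor_fst (hfst X) (hfst Y)]
    · rw [hε_tensor, comagma_tensor_snd (hsnd X) (hsnd Y)]

theorem cartesianMonoidal_of_uniformComagmaStructure (h : UniformComagmaStructure C) :
    CartesianMonoidal C := by
  obtain ⟨δ, ε, hfst, hsnd, hδ, hε, -, hε_unit, -, hδ_tensor⟩ := h
  refine ⟨ε, fun X f => by rw [← Category.comp_id f, ← hε_unit, hε], fun X Y => ⟨?_⟩⟩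
  refine isLimitOfComagma δ ε hfst hsnd (hδ _ _) (hε _ _) ?_
  rw [hδ_tensor, Category.assoc, tensorμ_comp_discard_tensorHom_discard,
    tensorHom_comp_tensorHom, hfst, hsnd, id_tensorHom_id]

/-- **Refined Fox theorem**: a symmetric monoidal category is cartesian monoidal iff it
carries a uniform, natural, counital comagma structure on every object. -/
theorem refined_fox :
    CartesianMonoidal C ↔ UniformComagmaStructure C :=
  ⟨uniformComagmaStructure_of_cartesianMonoidal C, cartesianMonoidal_of_uniformComagmaStructure C⟩
end

section
/- Let (C,⊗,I) be a symmetric monoidal category in which every object X carries a counital comagma structure (δ_X : X → X⊗X, ε_X : X → I), every morphism is a comagma homomorphism (f ; δ_Y = δ_X ; (f ⊗ f) and f ; ε_Y = ε_X), and the structure is uniform (ε_{X⊗Y} = ε_X ⊗ ε_Y, ε_I = id_I, δ_I = id, δ_{X⊗Y} = (δ_X ⊗ δ_Y) ; (id ⊗ σ_{X,Y} ⊗ id)). Then every comultiplication is cocommutative, δ_X ; σ_{X,X} = δ_X, and coassociative, δ_X ; (δ_X ⊗ id_X) ; α = δ_X ; (id_X ⊗ δ_X); hence every object (X, δ_X,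 ε_X) is a cocommutative comonoid. -/
/-!
Naturality of `δ` at the morphism `δ_X` itself, combined with uniformity of `δ` on `X ⊗ X`,
gives the medial law `δ ; (δ ⊗ δ) ; μ = δ ; (δ ⊗ δ)`, where `μ` swaps the two middle factors.
After post-composing with `(f ⊗ g) ⊗ (h ⊗ k)`, it lets one interchange `g` and `h`. When some
of `f, g, h, k` are counits, counitality turns the copies of `δ` they meet into unitors, and the
remaining `μ` is then a coherence isomorphism: for `(ε, id, id, ε)` it is the symmetry, giving
cocommutativity, and for `(id, id, ε, id)` it is the associator, giving coassociativity.
-/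

open CategoryTheory CategoryTheory.MonoidalCategory

universe v u

section Braided

variable {C : Type u} [Category.{v} C] [MonoidalCategory C] [BraidedCategory C]

theorem leftUnitor_inv_tensor_rightUnitor_inv_tensorμ (B D : C) :
    ((λ_ B).inv ⊗ₘ (ρ_ D).inv) ≫ tensorμ (𝟙_ C) B D (𝟙_ C) ≫ ((λ_ D).hom ⊗ₘ (ρ_ B).hom) =
      (β_ B D).hom := by
  simp [tensorμ, MonoidalCategory.tensorHom_def]
  monoidal

theorem whiskerLeft_leftUnitor_inv_tensorμ (A B D : C) :
    ((A ⊗ B) ◁ (λ_ D).inv) ≫ tensorμ A B (𝟙_ C) D ≫ ((ρ_ A).hom ▷ (B ⊗ D)) =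
      (α_ A B D).hom := by
  simp [tensorμ, braiding_tensorUnit_right]
  monoidal

variable {X : C} {δ : X ⟶ X ⊗ X} {ε : X ⟶ 𝟙_ C}

theorem medial_interchange (medial : δ ≫ (δ ⊗ₘ δ) ≫ tensorμ X X X X = δ ≫ (δ ⊗ₘ δ))
    {A B D E : C} (f : X ⟶ A) (g : X ⟶ B) (h : X ⟶ D) (k : X ⟶ E) :
    δ ≫ ((δ ≫ (f ⊗ₘ g)) ⊗ₘ (δ ≫ (h ⊗ₘ k))) ≫ tensorμ A B D E =
      δ ≫ ((δ ≫ (f ⊗ₘ h)) ⊗ₘ (δ ≫ (g ⊗ₘ k))) := by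
  calc _ = δ ≫ (δ ⊗ₘ δ) ≫ tensorμ X X X X ≫ ((f ⊗ₘ h) ⊗ₘ (g ⊗ₘ k)) := by
        rw [← tensorHom_comp_tensorHom_assoc, tensorμ_natural]
    _ = _ := by rw [reassoc_of% medial, tensorHom_comp_tensorHom]

theorem cocomm_of_medial (medial : δ ≫ (δ ⊗ₘ δ) ≫ tensorμ X X X X = δ ≫ (δ ⊗ₘ δ))
    (counit_left : δ ≫ ε ▷ X = (λ_ X).inv) (counit_right : δ ≫ X ◁ ε = (ρ_ X).inv) :
    δ ≫ (β_ X X).hom = δ := by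
  have swap := medial_interchange medial ε (𝟙 X) (𝟙 X) ε
  simp only [tensorHom_id, id_tensorHom, counit_left, counit_right] at swap
  calc δ ≫ (β_ X X).hom
      = δ ≫ ((λ_ X).inv ⊗ₘ (ρ_ X).inv) ≫ tensorμ (𝟙_ C) X X (𝟙_ C) ≫
          ((λ_ X).hom ⊗ₘ (ρ_ X).hom) := by rw [leftUnitor_inv_tensor_rightUnitor_inv_tensorμ]
    _ = δ := by rw [reassoc_of% swap, tensorHom_comp_tensorHom]; simp

theorem coassoc_of_medial (medial : δ ≫ (δ ⊗ₘ δ) ≫ tensorμ X X X X = δ ≫ (δ ⊗ₘ δ))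
    (counit_left : δ ≫ ε ▷ X = (λ_ X).inv) (counit_right : δ ≫ X ◁ ε = (ρ_ X).inv) :
    δ ≫ δ ▷ X ≫ (α_ X X X).hom = δ ≫ X ◁ δ := by
  have shift := medial_interchange medial (𝟙 X) (𝟙 X) ε (𝟙 X)
  simp only [tensorHom_id, id_tensorHom, id_whiskerRight, Category.comp_id, counit_left,
    counit_right] at shift
  calc δ ≫ δ ▷ X ≫ (α_ X X X).hom
      = δ ≫ (δ ⊗ₘ (λ_ X).inv) ≫ tensorμ X X (𝟙_ C) X ≫ ((ρ_ X).hom ▷ (X ⊗ X)) := by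
        rw [← whiskerLeft_leftUnitor_inv_tensorμ, MonoidalCategory.tensorHom_def_assoc]
    _ = δ ≫ X ◁ δ := by rw [reassoc_of% shift, MonoidalCategory.tensorHom_def]; simp

end Braided

variable {C : Type u} [Category.{v} C] [MonoidalCategory C] [SymmetricCategory C]

theorem comagma_cocomm_coassoc_general
    (δ : ∀ X : C, X ⟶ X ⊗ X) (ε : ∀ X : C, X ⟶ 𝟙_ C)
    -- counitality (up to unitors)
    (counit_right : ∀ X : C, δ X ≫ (X ◁ ε X) ≫ (ρ_ X).hom = 𝟙 X)
    (counit_left : ∀ X : C, δ X ≫ (ε X ▷ X) ≫ (λ_ X).hom = 𝟙 X)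
    -- every morphism is a comagma homomorphism
    (hom_δ : ∀ (X Y : C) (f : X ⟶ Y), f ≫ δ Y = δ X ≫ (f ⊗ₘ f))
    (unif_δ : ∀ X Y : C, δ (X ⊗ Y) = (δ X ⊗ₘ δ Y) ≫ tensorμ X X Y Y) :
    ∀ X : C,
      (δ X ≫ (β_ X X).hom = δ X) ∧
      (δ X ≫ (δ X ▷ X) ≫ (α_ X X X).hom = δ X ≫ (X ◁ δ X)) := by
  intro X
  have medial : δ X ≫ (δ X ⊗ₘ δ X) ≫ tensorμ X X X X = δ X ≫ (δ X ⊗ₘ δ X) := by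
    rw [← unif_δ, hom_δ]
  have hl : δ X ≫ ε X ▷ X = (λ_ X).inv :=
    (Iso.comp_hom_eq_id _).1 ((Category.assoc _ _ _).trans (counit_left X))
  have hr : δ X ≫ X ◁ ε X = (ρ_ X).inv :=
    (Iso.comp_hom_eq_id _).1 ((Category.assoc _ _ _).trans (counit_right X))
  exact ⟨cocomm_of_medial medial hl hr, coassoc_of_medial medial hl hr⟩

/-- If every object of a symmetric monoidal category carries a counital comagma structure
`(δ_X, ε_X)`, every morphism is a comagma homomorphism, and the structure is uniform,
then every comultiplication is cocommutative (`δ_X ; σ_{X,X} = δ_X`) and coassociative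
(`δ_X ; (δ_X ⊗ id) ; α = δ_X ; (id ⊗ δ_X)`); hence every object is a cocommutative
comonoid. -/
theorem comagma_cocomm_coassoc
    (δ : ∀ X : C, X ⟶ X ⊗ X) (ε : ∀ X : C, X ⟶ 𝟙_ C)
    -- counitality (up to unitors)
    (counit_right : ∀ X : C, δ X ≫ (X ◁ ε X) ≫ (ρ_ X).hom = 𝟙 X)
    (counit_left : ∀ X : C, δ X ≫ (ε X ▷ X) ≫ (λ_ X).hom = 𝟙 X)
    -- every morphism is a comagma homomorphism
    (hom_δ : ∀ (X Y : C) (f : X ⟶ Y), f ≫ δ Y = δ X ≫ (f ⊗ₘ f))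
    (hom_ε : ∀ (X Y : C) (f : X ⟶ Y), f ≫ ε Y = ε X)
    -- uniformity
    (unif_ε : ∀ X Y : C, ε (X ⊗ Y) = (ε X ⊗ₘ ε Y) ≫ (λ_ (𝟙_ C)).hom)
    (unif_εI : ε (𝟙_ C) = 𝟙 (𝟙_ C))
    (unif_δI : δ (𝟙_ C) = (λ_ (𝟙_ C)).inv)
    (unif_δ : ∀ X Y : C, δ (X ⊗ Y) = (δ X ⊗ₘ δ Y) ≫ tensorμ X X Y Y) :
    ∀ X : C,
      (δ X ≫ (β_ X X).hom = δ X) ∧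
      (δ X ≫ (δ X ▷ X) ≫ (α_ X X X).hom = δ X ≫ (X ◁ δ X)) :=
  comagma_cocomm_coassoc_general δ ε counit_right counit_left hom_δ unif_δ
end

section
/- Let A, B be sets and f : A → D(B) a finite-support stochastic map. Then there exists a function r : A × B → A × B such that: (1) r(a,b) = (a,b) whenever f(b|a) > 0 — equivalently, f ◁ id_{A×B} = f ◁ r in Stoch, where r is regarded as the deterministic morphism A ⊗ B → A ⊗ B; and (2) for every set E and all g, h : A × B → D(E), if f(b|a) · g(e|a,b) = f(b|a) · h(e|a,b) for all a ∈ A, b ∈ B, e ∈ E, then g(r(a,b)) = h(r(a,b)) for all (a,b) ∈ A × B. Consequently every morphism of Stoch has a range; i.e., the Markov category Stoch has ranges. -/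
/-!
STATEMENT 11: The Markov category `Stoch` has ranges.

For every finite-support stochastic map `f : A → D B` there is a function
`r : A × B → A × B` (a deterministic morphism `A ⊗ B ⟶ A ⊗ B` of `Stoch`) such that:
(1) `r (a, b) = (a, b)` whenever `f(b|a) > 0` (equivalently, `f ◁ id = f ◁ r`); and
(2) for every set `E` and all `g h : A × B → D E`, if
`f(b|a) · g(e|a,b) = f(b|a) · h(e|a,b)` for all `a, b, e` (i.e. `f ◁ g = f ◁ h`), then
`g (r (a,b)) = h (r (a,b))` for all `(a,b)`.  Hence every morphism of `Stoch` has a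
range, i.e. `Stoch` has ranges.
-/

open scoped BigOperators

/-- A finite-support probability distribution: the object map of the finite
distribution monad `D` on `Set`. -/
structure FDist (α : Type*) where
  /-- the probability of each point -/
  prob : α → ℝ
  nonneg : ∀ a, 0 ≤ prob a
  finite : (Function.support prob).Finite
  total : ∑ᶠ a, prob a = 1

/-- **`Stoch` has ranges**: every stochastic map `f : A → D B` admits a range
`r : A × B → A × B`. -/
theorem stoch_has_ranges {A B : Type*} (f : A → FDist B) :
    ∃ r : A × B → A × B,
      (∀ (a : A) (b : B), 0 < (f a).prob b → r (a, b) = (a, b)) ∧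
      (∀ (E : Type) (g h : A × B → FDist E),
        (∀ (a : A) (b : B) (e : E),
          (f a).prob b * (g (a, b)).prob e = (f a).prob b * (h (a, b)).prob e) →
        ∀ p : A × B, g (r p) = h (r p)) := by
  have hex : ∀ a : A, ∃ b : B, 0 < (f a).prob b := by
    intro a
    by_contra hc
    push_neg at hc
    have hz : ∀ b, (f a).prob b = 0 := fun b => le_antisymm (hc b) ((f a).nonneg b)
    have : (∑ᶠ b, (f a).prob b) = 0 := by
      simp [funext hz]
    rw [(f a).total] at this
    norm_num at this
  choose b0 hb0 using hex
  classical
  refine ⟨fun p => if 0 < (f p.1).prob p.2 then p else (p.1, b0 p.1), ?_, ?_⟩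
  · intro a b h
    simp [h]
  · intro E g h hfg p
    obtain ⟨a, b⟩ := p
    have key : ∀ b' : B, 0 < (f a).prob b' → g (a, b') = h (a, b') := by
      intro b' hb'
      have hprob : ∀ e, (g (a, b')).prob e = (h (a, b')).prob e := by
        intro e
        have := hfg a b' e
        exact mul_left_cancel₀ (ne_of_gt hb') this
      cases hg : g (a, b') with
      | mk gp _ _ _ =>
        cases hh : h (a, b') with
        | mk hp _ _ _ =>
          have : gp = hp := by
            funext e
            have := hprob e
            rw [hg, hh] at this
            exact this
          subst this
          congr 1 <;> apply Subsingleton.elim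
    by_cases hp : 0 < (f a).prob b
    · simpa [hp] using key b hp
    · simpa [hp] using key (b0 a) (hb0 a)
end

section
/- Every controlled stochastic process admits a factorization through conditionals: if f : X → Y is a controlled stochastic process given by f_n : X₀ × ⋯ × X_n → D(Y₀ × ⋯ × Y_n) satisfying causality, then there exists a family of functions c_n : Y₀ × ⋯ × Y_{n−1} × X₀ × ⋯ × X_n → D(Y_n) such that for every n and all arguments, f_n(y₀,…,y_n | x₀,…,x_n) = Π_{i=0}^{n} c_i(y_i | y₀,…,y_{i−1}, x₀,…,x_i); that is, f_n = c₀ ◁ c₁ ◁ ⋯ ◁ c_n in Stoch. -/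
/-!
STATEMENT 12: Every controlled stochastic process factors through conditionals.

A controlled stochastic process `f : X → Y` is a family
`f_n : X₀ × ⋯ × X_n → D (Y₀ × ⋯ × Y_n)` satisfying causality (marginalisation).  Then
there are conditionals `c_n : Y₀ × ⋯ × Y_{n-1} × X₀ × ⋯ × X_n → D (Y_n)` with
`f_n(y₀,…,y_n | x₀,…,x_n) = Π_{i=0}^n c_i(y_i | y₀,…,y_{i-1}, x₀,…,x_i)`,
i.e. `f_n = c₀ ◁ c₁ ◁ ⋯ ◁ c_n` in `Stoch`.
-/

open scoped BigOperators

/-- Tuples `Z₀ × ⋯ × Z_{n-1}` of the first `n` entries of a sequence of sets. -/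
def Tup (Z : ℕ → Type) (n : ℕ) : Type := ∀ i : Fin n, Z i

/-- Truncation of a tuple to its first `k` entries (`k ≤ n`). -/
def Tup.trunc {Z : ℕ → Type} {n : ℕ} (z : Tup Z n) (k : ℕ) (h : k ≤ n) : Tup Z k :=
  fun i => z ⟨i, lt_of_lt_of_le i.isLt h⟩

section Aux

variable {Y : ℕ → Type}

lemma snoc_trunc {n : ℕ} (y : Tup Y (n + 1)) :
    (Fin.snoc (Tup.trunc y n (Nat.le_succ n)) (y (Fin.last n)) : Tup Y (n + 1)) = y := by
  funext i
  refine Fin.lastCases ?_ (fun j => ?_) i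
  · exact Fin.snoc_last (α := fun i : Fin (n + 1) => Y i) _ _
  · exact Fin.snoc_castSucc _ _ j

lemma snoc_inj {n : ℕ} (y : Tup Y n) :
    Function.Injective (fun a : Y n => (Fin.snoc y a : Tup Y (n + 1))) := by
  intro a b h
  have := congrFun h (Fin.last n)
  exact (Fin.snoc_last (α := fun i : Fin (n + 1) => Y i) (p := y) (x := a)).symm.trans
    (this.trans (Fin.snoc_last (α := fun i : Fin (n + 1) => Y i) (p := y) (x := b)))

lemma support_snoc_finite {n : ℕ} (d : FDist (Tup Y (n + 1))) (y : Tup Y n) :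
    (Function.support fun a : Y n => d.prob (Fin.snoc y a)).Finite := by
  have hsub : (Function.support fun a : Y n => d.prob (Fin.snoc y a)) ⊆
      (fun a : Y n => (Fin.snoc y a : Tup Y (n + 1))) ⁻¹' Function.support d.prob := by
    intro a ha; exact ha
  exact Set.Finite.subset (Set.Finite.preimage ((snoc_inj y).injOn) d.finite) hsub

/-- marginal mass -/
noncomputable def marg {n : ℕ} (d : FDist (Tup Y (n + 1))) (y : Tup Y n) : ℝ :=
  ∑ᶠ a : Y n, d.prob (Fin.snoc y a)

lemma marg_nonneg {n : ℕ} (d : FDist (Tup Y (n + 1))) (y : Tup Y n) : 0 ≤ marg d y :=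
  finsum_nonneg fun _a => d.nonneg _

lemma le_marg {n : ℕ} (d : FDist (Tup Y (n + 1))) (y : Tup Y (n + 1)) :
    d.prob y ≤ marg d (Tup.trunc y n (Nat.le_succ n)) := by
  have := single_le_finsum (y (Fin.last n)) (support_snoc_finite d (Tup.trunc y n (Nat.le_succ n)))
    (fun a => d.nonneg _)
  rwa [snoc_trunc] at this

/-- a point of positive probability -/
lemma exists_pos {α : Type*} (d : FDist α) : ∃ a, 0 < d.prob a := by
  by_contra h
  push_neg at h
  have hz : ∀ a, d.prob a = 0 := fun a => le_antisymm (h a) (d.nonneg a)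
  have : (∑ᶠ a, d.prob a) = 0 := by simp [hz]
  rw [d.total] at this; norm_num at this

open Classical in
/-- point mass -/
noncomputable def FDist.pure {α : Type*} (a : α) : FDist α where
  prob b := if b = a then 1 else 0
  nonneg b := by by_cases h : b = a <;> simp [h]
  finite := (Set.finite_singleton a).subset (by
    intro b hb
    simp only [Function.mem_support] at hb
    by_contra hba
    simp only [Set.mem_singleton_iff] at hba
    rw [if_neg hba] at hb
    exact hb rfl)
  total := by
    rw [finsum_eq_single _ a (fun b hb => if_neg hb)]
    exact if_pos rfl

/-- the conditional -/
noncomputable def condl {n : ℕ} (d : FDist (Tup Y (n + 1))) (y : Tup Y n) : FDist (Y n) :=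
  if h : 0 < marg d y then
    { prob := fun a => d.prob (Fin.snoc y a) / marg d y
      nonneg := fun a => div_nonneg (d.nonneg _) h.le
      finite := by
        refine (support_snoc_finite d y).subset ?_
        intro a ha
        simp only [Function.mem_support] at ha ⊢
        intro h0; exact ha (by simp [h0])
      total := by
        have := finsum_mul (fun a : Y n => d.prob (Fin.snoc y a)) (marg d y)⁻¹
        simp only [div_eq_mul_inv]
        rw [← this, ← marg, mul_inv_cancel₀ h.ne'] }
  else
    FDist.pure ((exists_pos d).choose (Fin.last n))

/-- key identity -/
lemma key {n : ℕ} (d : FDist (Tup Y (n + 1))) (y : Tup Y (n + 1)) :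
    d.prob y = marg d (Tup.trunc y n (Nat.le_succ n)) *
      (condl d (Tup.trunc y n (Nat.le_succ n))).prob (y (Fin.last n)) := by
  set y' := Tup.trunc y n (Nat.le_succ n)
  by_cases h : 0 < marg d y'
  · rw [condl, dif_pos h]
    simp only
    rw [snoc_trunc, mul_div_cancel₀ _ h.ne']
  · have h0 : marg d y' = 0 := le_antisymm (not_lt.mp h) (marg_nonneg d y')
    have := le_marg d y
    rw [h0] at this ⊢
    have := le_antisymm this (d.nonneg y)
    rw [this, zero_mul]

end Aux


/-- **Factorisation of controlled stochastic processes through conditionals.**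
If `f` is causal, then there is a family of conditionals `c` whose iterated triangle
composition recovers `f`: for all `n`, `x` and `y`,
`f_n(y|x) = Π_{i=0}^n c_i(y_i | y₀,…,y_{i-1}, x₀,…,x_i)`. -/
theorem stochastic_process_conditionals (X Y : ℕ → Type)
    (f : ∀ n, Tup X (n + 1) → FDist (Tup Y (n + 1)))
    (causal : ∀ (n : ℕ) (x : Tup X (n + 2)) (y : Tup Y (n + 1)),
      (∑ᶠ yn : Y (n + 1), (f (n + 1) x).prob (Fin.snoc y yn)) =
        (f n (fun i => x i.castSucc)).prob y) :
    ∃ c : ∀ n, Tup X (n + 1) → Tup Y n → FDist (Y n),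
      ∀ (n : ℕ) (x : Tup X (n + 1)) (y : Tup Y (n + 1)),
        (f n x).prob y =
          ∏ i : Fin (n + 1),
            (c i (x.trunc (i + 1) i.isLt) (y.trunc i (le_of_lt i.isLt))).prob (y i) := by
  refine ⟨fun n x y => condl (f n x) y, ?_⟩
  intro n
  induction n with
  | zero =>
      intro x y
      rw [Fin.prod_univ_one]
      have hkey := key (f 0 x) y
      have hm : marg (f 0 x) (Tup.trunc y 0 (Nat.le_succ 0)) = 1 := by
        rw [marg, ← (f 0 x).total]
        refine finsum_eq_of_bijective _ ⟨snoc_inj _, fun z => ?_⟩ (fun a => rfl)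
        refine ⟨z (Fin.last 0), ?_⟩
        have : Tup.trunc y 0 (Nat.le_succ 0) = Tup.trunc z 0 (Nat.le_succ 0) := by
          funext i; exact absurd i.isLt (by omega)
        rw [this, snoc_trunc]
      rw [hm, one_mul] at hkey
      exact hkey
  | succ n ih =>
      intro x y
      rw [Fin.prod_univ_castSucc]
      have hkey := key (f (n + 1) x) y
      have hm : marg (f (n + 1) x) (Tup.trunc y (n + 1) (Nat.le_succ _)) =
          (f n (fun i => x i.castSucc)).prob (Tup.trunc y (n + 1) (Nat.le_succ _)) :=
        causal n x _
      rw [hm] at hkey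
      rw [ih (fun i => x i.castSucc) (Tup.trunc y (n + 1) (Nat.le_succ _))] at hkey
      rw [hkey]
      rfl
end
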